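/- arXiv:1312.2944 — 2 statements merged into one kernel-verified Lean document; each statement's English description precedes it below -/
import Mathlib

section
/- Let (B,j) be a C*-net bundle over a pathwise connected poset K with base point a, and let Π = π₁ᵃ(K) act on B_a via the holonomy action. Then the map T ↦ T_a is a bijection from the set of sections of (B,j) onto the fixed-point algebra of B_a under the Π-action. -/
/-- A 1-simplex in a poset: a support with two faces below it. -/
structure PosetSimplex (K : Type*) [PartialOrder K] where
  supp : K
  f0 : K
  f1 : K
  h0 : f0 ≤ supp
  h1 : f1 ≤ supp

/-- Paths in a poset: finite composable sequences of 1-simplices (with a trivial path). -/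
inductive NetPath (K : Type*) [PartialOrder K] : K → K → Type _
  | nil (a : K) : NetPath K a a
  | cons {a o : K} (p : NetPath K a o) (b : PosetSimplex K) (h : b.f1 = o) :
      NetPath K a b.f0

namespace NetPath

variable {K : Type*} [PartialOrder K]

/-- Concatenation of paths. -/
def comp : ∀ {a o e : K}, NetPath K a o → NetPath K o e → NetPath K a e
  | _, _, _, p, .nil _ => p
  | _, _, _, p, .cons q b h => .cons (p.comp q) b h

/-- The path consisting of a single 1-simplex, from its 1-face to its 0-face. -/
def single (b : PosetSimplex K) : NetPath K b.f1 b.f0 := .cons (.nil b.f1) b rfl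

end NetPath

/-- The opposite of a 1-simplex. -/
def PosetSimplex.op {K : Type*} [PartialOrder K] (b : PosetSimplex K) : PosetSimplex K :=
  ⟨b.supp, b.f1, b.f0, b.h1, b.h0⟩

/-- The reverse (opposite) of a path. -/
def NetPath.reverse {K : Type*} [PartialOrder K] : ∀ {a o : K}, NetPath K a o → NetPath K o a
  | _, _, .nil a => .nil a
  | a, _, .cons p b h =>
      (NetPath.single ⟨b.supp, b.f1, b.f0, b.h1, b.h0⟩).comp
        ((h.symm ▸ p.reverse : NetPath K b.f1 a))

/-- Homotopy of paths in a poset: the equivalence relation generated by elementary moves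
(replacing a 1-simplex by a composable decomposition through simplices with smaller support)
and cancellation of a 1-simplex with its opposite, compatible with concatenation. -/
inductive PathHomotopic (K : Type*) [PartialOrder K] :
    ∀ {a o : K}, NetPath K a o → NetPath K a o → Prop
  | refl {a o : K} (p : NetPath K a o) : PathHomotopic K p p
  | symm {a o : K} {p q : NetPath K a o} : PathHomotopic K p q → PathHomotopic K q p
  | trans {a o : K} {p q r : NetPath K a o} :
      PathHomotopic K p q → PathHomotopic K q r → PathHomotopic K p r
  | comp {a o e : K} {p p' : NetPath K a o} {q q' : NetPath K o e} :
      PathHomotopic K p p' → PathHomotopic K q q' → PathHomotopic K (p.comp q) (p'.comp q')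
  | decomp {s s₁ s₂ x y z : K} (hz : z ≤ s) (hx : x ≤ s)
      (hy1 : y ≤ s₁) (hx1 : x ≤ s₁) (hz2 : z ≤ s₂) (hy2 : y ≤ s₂)
      (hs1 : s₁ ≤ s) (hs2 : s₂ ≤ s) :
      PathHomotopic K (NetPath.single ⟨s, z, x, hz, hx⟩)
        ((NetPath.single ⟨s₁, y, x, hy1, hx1⟩).comp (NetPath.single ⟨s₂, z, y, hz2, hy2⟩))
  | cancel (b : PosetSimplex K) :
      PathHomotopic K ((NetPath.single b).comp (NetPath.single b.op)) (.nil b.f1)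

section Eval

variable {K : Type*} [PartialOrder K] (A : K → Type*)
  [∀ a, Ring (A a)] [∀ a, StarRing (A a)] [∀ a, Algebra ℂ (A a)]
  (j : ∀ ⦃a a' : K⦄, a ≤ a' → (A a ≃⋆ₐ[ℂ] A a'))

/-- Evaluation of a 1-simplex in a C*-net bundle: `j_b := j_{∂₀b,|b|} ∘ j_{|b|,∂₁b}⁻¹`
read as a *-isomorphism `A_{∂₁b} → A_{∂₀b}`. -/
def simplexEval (b : PosetSimplex K) : A b.f1 ≃⋆ₐ[ℂ] A b.f0 :=
  (j b.h1).trans (j b.h0).symm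

/-- Evaluation of a path in a C*-net bundle, composing the simplex evaluations. -/
def pathEval : ∀ {a o : K}, NetPath K a o → (A a ≃⋆ₐ[ℂ] A o)
  | _, _, .nil _ => StarAlgEquiv.refl ℂ _
  | _, _, .cons p b h => (pathEval p).trans (h ▸ simplexEval A j b)

end Eval

/-- The loop `g_{o'o} = [p_{ao'} * (o';o',o) * p_{oa}]` attached to an inclusion `o ≤ o'`
by a path frame `P`. -/
def frameLoop {K : Type*} [PartialOrder K] {a : K} (P : ∀ o : K, NetPath K a o)
    {o o' : K} (h : o ≤ o') : NetPath K a a :=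
  ((P o).comp (NetPath.single ⟨o', o', o, le_refl o', h⟩)).comp (P o').reverse


/-! Given a fixed point `t`, choose a path `P o` from `a` to every `o` and put
`T_o := j_{P o} t`. For `o ≤ o'` the frame loop `P o * (o'; o', o) * (P o')⁻¹` fixes `t`, and
since the composition law forces `j_{o'o'} = id`, so that `j_{(o'; o', o)} = j_{o'o}`, this
says exactly `j_{o'o} T_o = T_{o'}`. Conversely, a section is transported along every path,
so it is fixed by every loop and determined by its value at `a`. -/

section PathEval

variable {K : Type*} [PartialOrder K] (A : K → Type*)
  [∀ a, Ring (A a)] [∀ a, StarRing (A a)] [∀ a, Algebra ℂ (A a)]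
  (j : ∀ ⦃a a' : K⦄, a ≤ a' → (A a ≃⋆ₐ[ℂ] A a'))

def IsNetSection (T : ∀ o, A o) : Prop :=
  ∀ ⦃o o' : K⦄ (h : o ≤ o'), j h (T o) = T o'

variable {A j}

@[simp]
lemma pathEval_nil_apply (x : K) (v : A x) : pathEval A j (.nil x) v = v := by
  simp [pathEval]

lemma pathEval_cons_apply {x : K} {b : PosetSimplex K} (p : NetPath K x b.f1) (v : A x) :
    pathEval A j (.cons p b rfl) v = (j b.h0).symm (j b.h1 (pathEval A j p v)) := by
  simp [pathEval, simplexEval]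

lemma pathEval_single_apply (b : PosetSimplex K) (v : A b.f1) :
    pathEval A j (.single b) v = (j b.h0).symm (j b.h1 v) := by
  simp [NetPath.single, pathEval_cons_apply]

lemma pathEval_comp_apply {x y z : K} (p : NetPath K x y) (q : NetPath K y z) (v : A x) :
    pathEval A j (p.comp q) v = pathEval A j q (pathEval A j p v) := by
  induction q with
  | nil => simp [NetPath.comp]
  | cons q b h ih =>
    subst h
    rw [NetPath.comp, pathEval_cons_apply, pathEval_cons_apply, ih]

lemma pathEval_reverse_apply_pathEval {x y : K} (p : NetPath K x y) (v : A x) :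
    pathEval A j p.reverse (pathEval A j p v) = v := by
  induction p with
  | nil => simp [NetPath.reverse]
  | cons p b h ih =>
    subst h
    rw [NetPath.reverse, pathEval_comp_apply, pathEval_cons_apply, pathEval_single_apply]
    simpa using ih

lemma pathEval_reverse_apply {x y : K} (p : NetPath K x y) (w : A y) :
    pathEval A j p.reverse w = (pathEval A j p).symm w := by
  simpa using pathEval_reverse_apply_pathEval (j := j) p ((pathEval A j p).symm w)

lemma IsNetSection.pathEval_apply {T : ∀ o, A o} (hT : IsNetSection A j T) {x y : K}
    (p : NetPath K x y) : pathEval A j p (T x) = T y := by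
  induction p with
  | nil => simp
  | cons p b h ih =>
    subst h
    rw [pathEval_cons_apply, ih, hT b.h1, ← hT b.h0, StarAlgEquiv.symm_apply_apply]

lemma IsNetSection.eq_of_apply_eq (hconn : ∀ x y : K, Nonempty (NetPath K x y))
    {S T : ∀ o, A o} (hS : IsNetSection A j S) (hT : IsNetSection A j T) {a : K}
    (h : S a = T a) : S = T := by
  funext o
  obtain ⟨p⟩ := hconn a o
  rw [← hS.pathEval_apply p, ← hT.pathEval_apply p, h]

lemma apply_le_refl_of_trans (hj : ∀ ⦃x y z : K⦄ (h : x ≤ y) (h' : y ≤ z),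
      j (h.trans h') = (j h).trans (j h')) (o : K) (v : A o) :
    j le_rfl v = v :=
  (j le_rfl).injective (DFunLike.congr_fun (hj le_rfl le_rfl) v).symm

lemma pathEval_apply_eq_of_frameLoop (hrefl : ∀ (o : K) (v : A o), j le_rfl v = v) {a : K}
    (P : ∀ o, NetPath K a o) {o o' : K} (h : o ≤ o') {t : A a}
    (ht : pathEval A j (frameLoop P h) t = t) :
    j h (pathEval A j (P o) t) = pathEval A j (P o') t := by
  have hsingle (v : A o) : (j (le_refl o')).symm (j h v) = j h v :=
    (j le_rfl).symm_apply_eq.mpr (hrefl o' _).symm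
  rwa [frameLoop, pathEval_comp_apply, pathEval_comp_apply, pathEval_single_apply, hsingle,
    pathEval_reverse_apply, StarAlgEquiv.symm_apply_eq] at ht

end PathEval

/-- For a C*-net bundle `(B, j)` over a pathwise connected poset `K` with
base point `a`, the evaluation `T ↦ T_a` is a bijection from the set of sections of
`(B, j)` onto the fixed-point algebra of `B_a` under the holonomy action of `π₁ᵃ(K)`:
every section evaluates to a fixed point, and every fixed point extends uniquely to a
section. -/
theorem sections_biject_fixedPoints {K : Type*} [PartialOrder K]
    (hconn : ∀ a o : K, Nonempty (NetPath K a o))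
    (B : K → Type*) [∀ a, Ring (B a)] [∀ a, StarRing (B a)] [∀ a, Algebra ℂ (B a)]
    (j : ∀ ⦃a a' : K⦄, a ≤ a' → (B a ≃⋆ₐ[ℂ] B a'))
    (hj : ∀ ⦃a a' a'' : K⦄ (h : a ≤ a') (h' : a' ≤ a''),
      j (h.trans h') = (j h).trans (j h'))
    (a : K) :
    (∀ T : ∀ o, B o, (∀ ⦃o o' : K⦄ (h : o ≤ o'), j h (T o) = T o') →
      ∀ p : NetPath K a a, pathEval B j p (T a) = T a) ∧
    (∀ t : B a, (∀ p : NetPath K a a, pathEval B j p t = t) →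
      ∃! T : {T : ∀ o, B o // ∀ ⦃o o' : K⦄ (h : o ≤ o'), j h (T o) = T o'},
        T.1 a = t) := by
  refine ⟨fun T hT p => IsNetSection.pathEval_apply hT p, fun t ht => ?_⟩
  let P : ∀ o, NetPath K a o := fun o => (hconn a o).some
  have hsection : IsNetSection B j fun o => pathEval B j (P o) t := fun o o' h =>
    pathEval_apply_eq_of_frameLoop (apply_le_refl_of_trans hj) P h (ht _)
  refine ⟨⟨_, hsection⟩, ht (P a), fun S hS => Subtype.ext ?_⟩
  exact IsNetSection.eq_of_apply_eq hconn S.2 hsection (hS.trans (ht (P a)).symm)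
end

section
/- If K is a simply connected pathwise connected poset, then every C*-net bundle (A,j) over K is trivial: it is isomorphic to the constant net bundle with fibre A_a for any fixed a ∈ K, via the isomorphisms given by parallel transport along any choice of paths. -/
/-! Path evaluation turns concatenation into composition and reversal into inversion, and the
cocycle identity for `j` lets one compute a simplex evaluation through any upper bound of its
support; hence it is invariant under the elementary homotopies. On a simply connected poset it
is therefore independent of the path, so parallel transport to `a` along arbitrary paths gives
isomorphisms `φ o`, and `φ o' ∘ j h = φ o` follows by comparing the chosen path from `o` with
the one that first crosses the simplex `(o'; o', o)`, whose evaluation is `j h`. -/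

section NetBundle

variable {K : Type*} [PartialOrder K] {A : K → Type*}
  [∀ a, Ring (A a)] [∀ a, StarRing (A a)] [∀ a, Algebra ℂ (A a)]
  {j : ∀ ⦃a a' : K⦄, a ≤ a' → (A a ≃⋆ₐ[ℂ] A a')}

@[simp]
theorem pathEval_single (b : PosetSimplex K) :
    pathEval A j (.single b) = simplexEval A j b := by
  ext t
  simp only [NetPath.single, pathEval, StarAlgEquiv.trans_apply]
  rfl

theorem pathEval_comp {x y z : K} (p : NetPath K x y) (q : NetPath K y z) :
    pathEval A j (p.comp q) = (pathEval A j p).trans (pathEval A j q) := by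
  induction q with
  | nil => ext t; simp only [NetPath.comp, pathEval]; rfl
  | cons q b h ih =>
    subst h
    ext t
    simp only [NetPath.comp, pathEval, StarAlgEquiv.trans_apply, ih]

theorem simplexEval_op (b : PosetSimplex K) :
    simplexEval A j b.op = (simplexEval A j b).symm := rfl

theorem pathEval_reverse {x y : K} (p : NetPath K x y) :
    pathEval A j p.reverse = (pathEval A j p).symm := by
  induction p with
  | nil => ext t; simp only [NetPath.reverse, pathEval]; rfl
  | cons p b h ih =>
    subst h
    ext t
    simp only [NetPath.reverse, pathEval_comp, ih, pathEval, pathEval_single,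
      StarAlgEquiv.trans_apply, StarAlgEquiv.symm_trans_apply]
    rfl

variable (hj : ∀ ⦃a a' a'' : K⦄ (h : a ≤ a') (h' : a' ≤ a''),
  j (h.trans h') = (j h).trans (j h'))
include hj

theorem j_refl (x : K) : j (le_refl x) = .refl ℂ (A x) := by
  ext t
  simpa using (congrArg (fun e => (j (le_refl x)).symm (e t)) (hj (le_refl x) (le_refl x))).symm

theorem simplexEval_of_le {o o' : K} (h : o ≤ o') :
    simplexEval A j ⟨o', o', o, le_refl o', h⟩ = j h := by
  ext t
  simp [simplexEval, j_refl hj]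

theorem simplexEval_eq_of_supp_le (b : PosetSimplex K) {s : K} (hs : b.supp ≤ s) :
    simplexEval A j b = (j (b.h1.trans hs)).trans (j (b.h0.trans hs)).symm := by
  ext t
  simp [simplexEval, hj b.h0 hs, hj b.h1 hs]

theorem pathEval_eq_of_homotopic {x y : K} {p q : NetPath K x y}
    (h : PathHomotopic K p q) : pathEval A j p = pathEval A j q := by
  induction h with
  | refl p => rfl
  | symm _ ih => exact ih.symm
  | trans _ _ ih₁ ih₂ => exact ih₁.trans ih₂
  | comp _ _ ih₁ ih₂ => rw [pathEval_comp, pathEval_comp, ih₁, ih₂]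
  | decomp hz hx hy₁ hx₁ hz₂ hy₂ hs₁ hs₂ =>
    rw [pathEval_comp, pathEval_single, pathEval_single, pathEval_single,
      simplexEval_eq_of_supp_le hj ⟨_, _, _, hy₁, hx₁⟩ hs₁,
      simplexEval_eq_of_supp_le hj ⟨_, _, _, hz₂, hy₂⟩ hs₂]
    ext t
    simp [simplexEval]
  | cancel b =>
    -- `b.op.f1` is `b.f0` only up to unfolding, so `rw` cannot see through `.single b.op`.
    have hop : pathEval A j (.single b.op : NetPath K b.f0 b.f1) = (simplexEval A j b).symm :=
      (pathEval_single b.op).trans (simplexEval_op b)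
    calc _ = (simplexEval A j b).trans (simplexEval A j b).symm :=
          (pathEval_comp _ _).trans (congrArg₂ StarAlgEquiv.trans (pathEval_single b) hop)
      _ = pathEval A j (.nil b.f1) := by ext t; simp [pathEval]

theorem pathEval_eq_of_loops_homotopic_nil
    (hsc : ∀ (x : K) (p : NetPath K x x), PathHomotopic K p (.nil x))
    {x y : K} (p q : NetPath K x y) : pathEval A j p = pathEval A j q := by
  have hloop := pathEval_eq_of_homotopic hj (hsc x (p.comp q.reverse))
  rw [pathEval_comp, pathEval_reverse] at hloop
  ext t
  simpa [pathEval] using congrArg (fun e => pathEval A j q (e t)) hloop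

end NetBundle

/-- If `K` is a simply connected pathwise connected poset, then every
C*-net bundle `(A, j)` over `K` is trivial: it is isomorphic to the constant net bundle
with fibre `A_a`, via isomorphisms given by parallel transport along paths. -/
theorem simplyConnected_netBundle_trivial {K : Type*} [PartialOrder K]
    (hconn : ∀ a o : K, Nonempty (NetPath K a o))
    (hsc : ∀ (x : K) (p : NetPath K x x), PathHomotopic K p (.nil x))
    (A : K → Type*) [∀ a, Ring (A a)] [∀ a, StarRing (A a)] [∀ a, Algebra ℂ (A a)]
    (j : ∀ ⦃a a' : K⦄, a ≤ a' → (A a ≃⋆ₐ[ℂ] A a'))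
    (hj : ∀ ⦃a a' a'' : K⦄ (h : a ≤ a') (h' : a' ≤ a''),
      j (h.trans h') = (j h).trans (j h'))
    (a : K) :
    ∃ φ : ∀ o, A o ≃⋆ₐ[ℂ] A a,
      (∀ o, ∃ p : NetPath K o a, φ o = pathEval A j p) ∧
      (∀ ⦃o o' : K⦄ (h : o ≤ o') (t : A o), φ o' (j h t) = φ o t) := by
  let P (o : K) : NetPath K o a := (hconn o a).some
  refine ⟨fun o => pathEval A j (P o), fun o => ⟨P o, rfl⟩, fun o o' h t => ?_⟩
  have hindep := pathEval_eq_of_loops_homotopic_nil hj hsc (P o)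
    ((NetPath.single ⟨o', o', o, le_refl o', h⟩).comp (P o'))
  simp only [hindep, pathEval_comp, pathEval_single, simplexEval_of_le hj, StarAlgEquiv.trans_apply]
end
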